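/- There is a family { G_α : α < 𝔠 } of clopen subgroups of the topological group H(ω*) (with the compact-open topology) such that: (1) the family of pairs (G_α, H(ω*) \ G_α) is independent, i.e. for every finite set σ ⊆ 𝔠 and every function ξ : σ → {0,1}, the set ⋂_{α ∈ σ} A_α^{ξ(α)} is infinite, where A_α^0 = G_α and A_α^1 = H(ω*) \ G_α; and (2) for every infinite subset σ ⊆ 𝔠, the intersection ⋂_{α ∈ σ} G_α is nowhere dense in H(ω*). -/

import Mathlib

open Set Topology TopologicalSpace

/-- The compact-open topology on the group of self-homeomorphisms of a space:
the topology induced from the compact-open topology on `C(X, X)`. -/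
instance homeomorphCompactOpen (X : Type*) [TopologicalSpace X] :
    TopologicalSpace (X ≃ₜ X) :=
  TopologicalSpace.induced (fun h : X ≃ₜ X => (h : C(X, X))) ContinuousMap.compactOpen

/-- The group of self-homeomorphisms of a space, under composition. -/
instance homeomorphGroup (X : Type*) [TopologicalSpace X] : Group (X ≃ₜ X) where
  mul f g := g.trans f
  one := Homeomorph.refl X
  inv := Homeomorph.symm
  mul_assoc _ _ _ := Homeomorph.ext fun _ => rfl
  one_mul _ := Homeomorph.ext fun _ => rfl
  mul_one _ := Homeomorph.ext fun _ => rfl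
  inv_mul_cancel f := Homeomorph.ext fun x => f.symm_apply_apply x

/-- The weight of a topological space: the least cardinality of a base of its topology. -/
noncomputable def TopologicalSpace.weight (X : Type u) [TopologicalSpace X] : Cardinal.{u} :=
  ⨅ B : {B : Set (Set X) // TopologicalSpace.IsTopologicalBasis B}, Cardinal.mk B.1

/-- A set is an Fσ-set if it is a countable union of closed sets. -/
def IsFsigma {X : Type*} [TopologicalSpace X] (s : Set X) : Prop :=
  ∃ F : ℕ → Set X, (∀ n, IsClosed (F n)) ∧ s = ⋃ n, F n

/-- An F-space (for normal spaces): disjoint open Fσ-sets have disjoint closures. -/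
def IsFSpace (X : Type*) [TopologicalSpace X] : Prop :=
  ∀ U V : Set X, IsOpen U → IsOpen V → IsFsigma U → IsFsigma V → Disjoint U V →
    Disjoint (closure U) (closure V)

/-- A Parovičenko space: a compact zero-dimensional F-space of weight `𝔠` in which
every nonempty Gδ-set has infinite interior. -/
structure IsParovicenko (X : Type u) [TopologicalSpace X] : Prop where
  compact : CompactSpace X
  t2 : T2Space X
  zeroDim : TopologicalSpace.IsTopologicalBasis {s : Set X | IsClopen s}
  fSpace : IsFSpace X
  weight_eq : TopologicalSpace.weight X = Cardinal.continuum
  gdelta_int : ∀ s : Set X, IsGδ s → s.Nonempty → (interior s).Infinite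

/-- The Gδ-modification of a topology: the topology generated by the Gδ-sets. -/
def gdeltaMod {X : Type*} (t : TopologicalSpace X) : TopologicalSpace X :=
  TopologicalSpace.generateFrom {s : Set X | @IsGδ X t s}

/-- The Čech–Stone remainder `βα \ α` of a space `α`. -/
abbrev CechStoneRemainder (α : Type u) [TopologicalSpace α] : Type u :=
  {p : StoneCech α // p ∉ Set.range (stoneCechUnit : α → StoneCech α)}

/-- `ω* = βω \ ω`, the Čech–Stone remainder of the countable discrete space `ω`. -/
abbrev OmegaStar : Type := CechStoneRemainder ℕ

/-!
Fix an independent family `A_S` (`S ⊆ ℕ`) of subsets of `ℕ`, i.e. every finite Boolean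
combination of the `A_S` is infinite, and let `G_S` be the stabiliser of the clopen set
`A_S* ⊆ ω*`. Stabilisers of clopen sets are clopen in the compact-open topology.

Every permutation of `ℕ` induces a homeomorphism of `ω*`. Permuting the atoms of finitely many
`A_S` realises any pattern of membership in the `G_S`, so each pattern set contains a coset of the
open subgroup `⋂ G_S`; that coset is infinite because `H(ω*)` has no isolated points.

A basic neighbourhood of `h ∈ H(ω*)` constrains only finitely many clopen sets `D*`. Among
infinitely many `A_S` one splits an atom of the algebra generated by the `D` into two infinite
pieces, and swapping these pieces yields `g` fixing every `D*` but moving `A_S*`. Then `h * g` lies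
in the neighbourhood but `h` and `h * g` are not both in `G_S`, so `⋂ G_S` has empty interior.
-/

open Filter Pointwise MulAction

theorem Ultrafilter.le_cofinite_iff_forall_ne_pure {α : Type*} {u : Ultrafilter α} :
    (u : Filter α) ≤ cofinite ↔ ∀ a, u ≠ pure a := by
  refine ⟨fun hu a hua => ?_, fun hu => (le_cofinite_or_eq_pure u).resolve_right ?_⟩
  · have : ({a}ᶜ : Set α) ∈ u := hu (finite_singleton a).compl_mem_cofinite
    simp [hua] at this
  · rintro ⟨a, rfl⟩
    exact hu a rfl

theorem Ultrafilter.continuous_map {α β : Type*} (f : α → β) :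
    Continuous (Ultrafilter.map f) := by
  refine continuous_generateFrom_iff.2 ?_
  rintro _ ⟨s, rfl⟩
  exact ultrafilter_isOpen_basic (f ⁻¹' s)

def Ultrafilter.mapHomeomorph {α β : Type*} (e : α ≃ β) : Ultrafilter α ≃ₜ Ultrafilter β where
  toFun := map e
  invFun := map e.symm
  left_inv u := by simp [Ultrafilter.map_map]
  right_inv u := by simp [Ultrafilter.map_map]
  continuous_toFun := continuous_map e
  continuous_invFun := continuous_map e.symm

namespace StoneCech

variable (α : Type*) [TopologicalSpace α] [DiscreteTopology α]

noncomputable def homeomorphUltrafilter : StoneCech α ≃ₜ Ultrafilter α where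
  toFun := stoneCechExtend (continuous_of_discreteTopology (f := pure))
  invFun := Ultrafilter.extend stoneCechUnit
  left_inv := congrFun <| stoneCech_hom_ext
    ((continuous_ultrafilter_extend _).comp (continuous_stoneCechExtend _)) continuous_id
    (funext fun a => by simp [stoneCechExtend_stoneCechUnit])
  right_inv := congrFun <| denseRange_pure.equalizer
    ((continuous_stoneCechExtend _).comp (continuous_ultrafilter_extend _)) continuous_id
    (funext fun a => by simp [stoneCechExtend_stoneCechUnit])
  continuous_toFun := continuous_stoneCechExtend _
  continuous_invFun := continuous_ultrafilter_extend _

variable {α}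

@[simp]
theorem homeomorphUltrafilter_stoneCechUnit (a : α) :
    homeomorphUltrafilter α (stoneCechUnit a) = pure a :=
  stoneCechExtend_stoneCechUnit continuous_of_discreteTopology a

theorem mem_range_stoneCechUnit_iff {p : StoneCech α} :
    p ∈ range stoneCechUnit ↔ homeomorphUltrafilter α p ∈ range pure := by
  have hunit : homeomorphUltrafilter α ∘ stoneCechUnit = pure :=
    funext homeomorphUltrafilter_stoneCechUnit
  rw [← (homeomorphUltrafilter α).injective.mem_set_image, ← range_comp, hunit]

end StoneCech

namespace Homeomorph

variable {X : Type*} [TopologicalSpace X]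

instance applyMulAction : MulAction (X ≃ₜ X) X where
  smul h x := h x
  one_smul _ := rfl
  mul_smul _ _ _ := rfl

theorem isEmbedding_toContinuousMap :
    IsEmbedding (fun h : X ≃ₜ X => (h : C(X, X))) :=
  ⟨.induced _, fun _ _ hfg => Homeomorph.ext (ContinuousMap.congr_fun hfg)⟩

instance [T2Space X] : T2Space (X ≃ₜ X) :=
  isEmbedding_toContinuousMap.t2Space

theorem mem_stabilizer_iff_preimage_eq {s : Set X} {h : X ≃ₜ X} :
    h ∈ stabilizer (X ≃ₜ X) s ↔ h ⁻¹' s = s := by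
  rw [← Subgroup.inv_mem_iff, mem_stabilizer_iff, ← Set.image_smul]
  exact iff_of_eq (congrArg (· = s) (h.image_symm ▸ rfl))

theorem preimage_eq_iff_mapsTo {s : Set X} {h : X ≃ₜ X} :
    h ⁻¹' s = s ↔ MapsTo h s s ∧ MapsTo h sᶜ sᶜ := by
  simp only [mapsTo_iff_subset_preimage, preimage_compl, compl_subset_compl]
  exact ⟨fun h => ⟨h.ge, h.le⟩, fun h => h.2.antisymm h.1⟩

theorem isClopen_stabilizer [CompactSpace X] {s : Set X} (hs : IsClopen s) :
    IsClopen (stabilizer (X ≃ₜ X) s : Set (X ≃ₜ X)) := by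
  have hmaps : IsClopen {f : C(X, X) | MapsTo f s s ∧ MapsTo f sᶜ sᶜ} :=
    (ContinuousMap.isClopen_setOfPred_mapsTo hs.isClosed.isCompact hs).inter
      (ContinuousMap.isClopen_setOfPred_mapsTo hs.compl.isClosed.isCompact hs.compl)
  convert hmaps.preimage isEmbedding_toContinuousMap.continuous using 1
  ext h
  exact mem_stabilizer_iff_preimage_eq.trans preimage_eq_iff_mapsTo

theorem tendsto_mul_iInf_stabilizer [CompactSpace X] [T2Space X] [TotallyDisconnectedSpace X]
    (h : X ≃ₜ X) :
    Tendsto (h * ·) (⨅ C : Clopens X, 𝓟 (stabilizer (X ≃ₜ X) (C : Set X))) (𝓝 h) := by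
  rw [isEmbedding_toContinuousMap.tendsto_nhds_iff, ContinuousMap.tendsto_nhds_compactOpen]
  intro K hK U hU hKU
  obtain ⟨C, hC, hKC, hCU⟩ := exists_clopen_of_closed_subset_open hK.isClosed
    (hU.preimage h.continuous) hKU
  filter_upwards [mem_iInf_of_mem ⟨C, hC⟩ (mem_principal_self _)] with g hg x hx
  exact hCU ((mem_stabilizer_iff_preimage_eq.1 hg).ge (hKC hx))

end Homeomorph

namespace Equiv.Perm

variable {α F : Type*}

theorem exists_comp_eq_of_nonempty_equiv (c : α → F) (φ : Perm F)
    (h : ∀ f, Nonempty ({x // c x = f} ≃ {x // c x = φ f})) :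
    ∃ π : Perm α, ∀ x, c (π x) = φ (c x) := by
  have e := fun f => (h f).some
  refine ⟨(sigmaFiberEquiv c).symm.trans ((sigmaCongr φ e).trans (sigmaFiberEquiv c)), fun x => ?_⟩
  exact (e (c x) ⟨x, rfl⟩).2

theorem exists_comp_eq_of_infinite [Countable α] (c : α → F) (φ : Perm F)
    (h : ∀ f, φ f ≠ f → {x | c x = f}.Infinite ∧ {x | c x = φ f}.Infinite) :
    ∃ π : Perm α, ∀ x, c (π x) = φ (c x) := by
  refine exists_comp_eq_of_nonempty_equiv c φ fun f => ?_
  by_cases hf : φ f = f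
  · exact ⟨Equiv.subtypeEquivRight fun x => by rw [hf]⟩
  · have : Infinite {x // c x = f} := (h f hf).1.to_subtype
    have : Infinite {x // c x = φ f} := (h f hf).2.to_subtype
    exact nonempty_equiv_of_countable

theorem exists_comp_eq_and_infinite_preimage_diff [Countable α] {d : α → F} {v : F} {A : Set α}
    (hin : ({x | d x = v} ∩ A).Infinite) (hout : ({x | d x = v} \ A).Infinite) :
    ∃ τ : Perm α, (∀ x, d (τ x) = d x) ∧ (τ ⁻¹' A \ A).Infinite := by
  classical
  set c : α → F × Prop := fun x => (d x, x ∈ A)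
  have hc : ∀ x, c x = (v, True) ↔ x ∈ {x | d x = v} ∩ A := by simp [c]
  have hc' : ∀ x, c x = (v, False) ↔ x ∈ {x | d x = v} \ A := by simp [c]
  obtain ⟨τ, hτ⟩ := exists_comp_eq_of_infinite c (swap (v, True) (v, False)) fun f hf => by
    rcases eq_or_ne f (v, True) with rfl | h1
    · simpa [hc, hc'] using ⟨hin, hout⟩
    rcases eq_or_ne f (v, False) with rfl | h2
    · simpa [hc, hc'] using ⟨hout, hin⟩
    exact absurd (swap_apply_of_ne_of_ne h1 h2) hf
  refine ⟨τ, fun x => congrArg Prod.fst (hτ x) |>.trans ?_, hout.mono fun x hx => ?_⟩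
  · rw [swap_apply_def]
    split_ifs with h1 h2
    · exact congrArg Prod.fst h1.symm
    · exact congrArg Prod.fst h2.symm
    · rfl
  · have : c (τ x) = (v, True) := by rw [hτ, (hc' x).2 hx, swap_apply_right]
    exact ⟨((hc _).1 this).2, hx.2⟩

end Equiv.Perm

section IndependentFamily

variable {ι T : Type*}

def IsIndependentFamily (A : ι → Set T) : Prop :=
  ∀ (σ : Finset ι) (v : ι → Prop), {x | ∀ i ∈ σ, x ∈ A i ↔ v i}.Infinite

namespace IsIndependentFamily

variable {A : ι → Set T}

theorem infinite (hA : IsIndependentFamily A) (i : ι) : (A i).Infinite :=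
  (hA {i} fun _ => True).mono fun x hx => by simpa using hx

theorem preimage (hA : IsIndependentFamily A) {T' : Type*} {f : T' → T}
    (hf : Function.Surjective f) : IsIndependentFamily fun i => f ⁻¹' A i :=
  fun σ v => (hA σ v).preimage (by simp [hf.range_eq])

/-- Otherwise each `A i` is determined up to a finite set by the fibres of `d` it meets in an
infinite set, and two of the infinitely many `A i` would be almost equal. -/
theorem exists_infinite_fiber_inter_and_diff (hA : IsIndependentFamily A) {σ : Set ι}
    (hσ : σ.Infinite) {F : Type*} [Finite F] (d : T → F) :
    ∃ i ∈ σ, ∃ v, ({x | d x = v} ∩ A i).Infinite ∧ ({x | d x = v} \ A i).Infinite := by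
  classical
  by_contra! hsplit
  obtain ⟨i, hi, j, hj, hij, hfib⟩ := hσ.exists_ne_map_eq_of_mapsTo
    (f := fun i v => ({x | d x = v} ∩ A i).Infinite) (mapsTo_univ _ _) finite_univ
  have hfin : (A i \ A j).Finite := by
    have hcover : A i \ A j ⊆ ⋃ v, {x | d x = v} ∩ (A i \ A j) :=
      fun x hx => mem_iUnion.2 ⟨d x, rfl, hx⟩
    refine (finite_iUnion fun v => ?_).subset hcover
    by_cases hv : ({x | d x = v} ∩ A i).Infinite
    · have hv' : ({x | d x = v} ∩ A j).Infinite := congrFun hfib v ▸ hv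
      exact (hsplit j hj v hv').subset fun x hx => ⟨hx.1, hx.2.2⟩
    · exact (not_infinite.1 hv).subset fun x hx => ⟨hx.1, hx.2.1⟩
  have hcell : {x | ∀ k ∈ ({i, j} : Finset ι), x ∈ A k ↔ k = i} ⊆ A i \ A j :=
    fun x hx => ⟨by simpa using hx i (by simp),
      fun hxj => hij (by simpa using ((hx j (by simp)).1 hxj).symm)⟩
  exact (hA {i, j} (· = i)).mono hcell hfin

theorem infinite_fiber (hA : IsIndependentFamily A) (σ : Finset ι) (w : σ → Prop) :
    {x | (fun i : σ => x ∈ A i) = w}.Infinite :=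
  (hA σ fun i => ∃ h : i ∈ σ, w ⟨i, h⟩).mono fun _ hx =>
    funext fun i => propext ((hx i i.2).trans ⟨fun ⟨_, h⟩ => h, fun h => ⟨i.2, h⟩⟩)

theorem exists_perm_preimage_eq [Countable T] (hA : IsIndependentFamily A) (σ : Finset ι)
    (ξ : ι → Bool) : ∃ π : Equiv.Perm T, ∀ i ∈ σ, π ⁻¹' A i = if ξ i then (A i)ᶜ else A i := by
  let flip : Equiv.Perm (σ → Prop) :=
    Function.Involutive.toPerm (fun w i => if ξ i then ¬ w i else w i) fun w => by
      funext i; dsimp only; split_ifs <;> simp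
  obtain ⟨π, hπ⟩ := Equiv.Perm.exists_comp_eq_of_infinite (fun x (i : σ) => x ∈ A i) flip
    fun w _ => ⟨hA.infinite_fiber σ w, hA.infinite_fiber σ _⟩
  refine ⟨π, fun i hi => ext fun x => ?_⟩
  have hx : (π x ∈ A i) = if ξ i then x ∉ A i else x ∈ A i := congrFun (hπ x) ⟨i, hi⟩
  rw [mem_preimage, hx]
  split_ifs <;> rfl

end IsIndependentFamily

end IndependentFamily

open scoped Classical in
noncomputable def initialTrace (N : ℕ) (S : Set ℕ) : Finset ℕ := (Finset.range N).filter (· ∈ S)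

theorem exists_injOn_initialTrace (σ : Finset (Set ℕ)) :
    ∃ N, Set.InjOn (initialTrace N) σ := by
  have hsep : ∀ S T : Set ℕ, ∀ᶠ N in atTop, initialTrace N S = initialTrace N T → S = T := by
    intro S T
    by_cases hST : S = T
    · exact Eventually.of_forall fun _ _ => hST
    obtain ⟨n, hn⟩ : ∃ n, ¬(n ∈ S ↔ n ∈ T) := by
      by_contra! h
      exact hST (ext h)
    filter_upwards [eventually_gt_atTop n] with N hN heq
    have := congrArg (n ∈ ·) heq
    simp [initialTrace, hN] at this
    exact absurd this hn
  obtain ⟨N, hN⟩ := ((eventually_all_finset σ).2 fun S _ =>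
    (eventually_all_finset σ).2 fun T _ => hsep S T).exists
  exact ⟨N, fun S hS T hT => hN S hS T hT⟩

/-- Hausdorff's independent family: the coordinate `k` of `(N, 𝒜, k)` only serves to make
every finite Boolean combination infinite. -/
def traceFamily (S : Set ℕ) : Set (ℕ × Finset (Finset ℕ) × ℕ) :=
  {t | initialTrace t.1 S ∈ t.2.1}

theorem isIndependentFamily_traceFamily : IsIndependentFamily traceFamily := by
  classical
  intro σ v
  obtain ⟨N, hN⟩ := exists_injOn_initialTrace σ
  let 𝒜 := (σ.filter v).image (initialTrace N)
  refine infinite_of_injective_forall_mem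
    ((Prod.mk_right_injective N).comp (Prod.mk_right_injective 𝒜)) fun k S hS => ?_
  show initialTrace N S ∈ 𝒜 ↔ v S
  simp only [𝒜, Finset.mem_image, Finset.mem_filter]
  exact ⟨fun ⟨T, ⟨hT, hvT⟩, hTS⟩ => hN hT hS hTS ▸ hvT, fun hvS => ⟨S, ⟨hS, hvS⟩, rfl⟩⟩

theorem exists_isIndependentFamily_nat : ∃ A : Set ℕ → Set ℕ, IsIndependentFamily A := by
  obtain ⟨e⟩ := nonempty_equiv_of_countable (α := ℕ) (β := ℕ × Finset (Finset ℕ) × ℕ)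
  exact ⟨_, isIndependentFamily_traceFamily.preimage e.surjective⟩

theorem Subgroup.infinite_biInter_ite {G ι : Type*} [Group G] (H : ι → Subgroup G)
    (σ : Finset ι) (ξ : ι → Bool) {g : G} (hg : ∀ i ∈ σ, g ∈ H i ↔ ξ i = false)
    (hH : (⋂ i ∈ σ, (H i : Set G)).Infinite) :
    (⋂ i ∈ σ, if ξ i then (H i : Set G)ᶜ else H i).Infinite := by
  refine (hH.image (mul_right_injective g).injOn).mono ?_
  rintro _ ⟨k, hk, rfl⟩
  refine mem_iInter₂.2 fun i hi => ?_
  have hgk := (Subgroup.mul_mem_cancel_right _ (mem_iInter₂.1 hk i hi)).trans (hg i hi)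
  cases hξ : ξ i <;> simpa [hξ] using hgk

namespace OmegaStar

noncomputable def homeomorphNonprincipal :
    OmegaStar ≃ₜ {u : Ultrafilter ℕ // (u : Filter ℕ) ≤ cofinite} :=
  (StoneCech.homeomorphUltrafilter ℕ).subtype fun p => by
    rw [StoneCech.mem_range_stoneCechUnit_iff, Ultrafilter.le_cofinite_iff_forall_ne_pure]
    simp [eq_comm]

noncomputable def ultrafilter (p : OmegaStar) : Ultrafilter ℕ := homeomorphNonprincipal p

theorem continuous_ultrafilter : Continuous ultrafilter :=
  continuous_subtype_val.comp homeomorphNonprincipal.continuous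

instance : CompactSpace OmegaStar := by
  have hclosed : IsClosed {u : Ultrafilter ℕ | (u : Filter ℕ) ≤ cofinite} := by
    simp only [le_cofinite_iff_compl_singleton_mem, ofPred_forall]
    exact isClosed_iInter fun a => ultrafilter_isClosed_basic _
  have : CompactSpace {u : Ultrafilter ℕ // (u : Filter ℕ) ≤ cofinite} :=
    isCompact_iff_compactSpace.1 hclosed.isCompact
  exact homeomorphNonprincipal.symm.compactSpace

instance : TotallyDisconnectedSpace OmegaStar :=
  homeomorphNonprincipal.symm.totallyDisconnectedSpace

/-- The paper's `A*`: the trace on `ω*` of the closure of `A` in `βℕ`. -/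
def starSet (A : Set ℕ) : Set OmegaStar := {p | A ∈ ultrafilter p}

theorem isClopen_starSet (A : Set ℕ) : IsClopen (starSet A) :=
  IsClopen.preimage ⟨ultrafilter_isClosed_basic A, ultrafilter_isOpen_basic A⟩
    continuous_ultrafilter

theorem starSet_compl (A : Set ℕ) : starSet Aᶜ = (starSet A)ᶜ :=
  ext fun _ => Ultrafilter.compl_mem_iff_notMem

theorem exists_ultrafilter_eq {u : Ultrafilter ℕ} (hu : (u : Filter ℕ) ≤ cofinite) :
    ∃ p, ultrafilter p = u :=
  ⟨homeomorphNonprincipal.symm ⟨u, hu⟩, by simp [ultrafilter]⟩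

theorem starSet_nonempty {A : Set ℕ} (hA : A.Infinite) : (starSet A).Nonempty := by
  have := hA.cofinite_inf_principal_neBot
  obtain ⟨p, hp⟩ := exists_ultrafilter_eq ((Ultrafilter.of_le (cofinite ⊓ 𝓟 A)).trans inf_le_left)
  refine ⟨p, ?_⟩
  rw [starSet, mem_ofPred_eq, hp]
  exact Ultrafilter.of_le _ (mem_inf_of_right (mem_principal_self A))

theorem starSet_ne_of_infinite_diff {A B : Set ℕ} (h : (A \ B).Infinite) :
    starSet A ≠ starSet B := by
  obtain ⟨p, hp⟩ := starSet_nonempty h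
  have hB : p ∈ starSet Bᶜ := mem_of_superset hp fun _ hx => hx.2
  rw [starSet_compl] at hB
  exact fun hAB => hB (hAB ▸ mem_of_superset hp sdiff_subset)

theorem isTopologicalBasis_range_starSet : IsTopologicalBasis (range starSet) := by
  have := ultrafilterBasis_is_basis.isInducing
    (Topology.IsInducing.subtypeVal.comp homeomorphNonprincipal.isInducing)
  rwa [ultrafilterBasis, ← range_comp] at this

theorem exists_starSet_eq (C : Clopens OmegaStar) : ∃ D, starSet D = C := by
  obtain ⟨s, hs, hC⟩ := (isCompact_open_iff_eq_finite_iUnion_of_isTopologicalBasis starSet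
    isTopologicalBasis_range_starSet (fun A => (isClopen_starSet A).isClosed.isCompact) C).1
    ⟨C.isClopen.isClosed.isCompact, C.isClopen.isOpen⟩
  refine ⟨⋃ A ∈ s, A, ?_⟩
  rw [hC]
  ext p
  simpa [starSet] using Ultrafilter.finite_biUnion_mem_iff hs

noncomputable def permHomeomorph (π : Equiv.Perm ℕ) : OmegaStar ≃ₜ OmegaStar :=
  homeomorphNonprincipal.trans <|
    ((Ultrafilter.mapHomeomorph π).subtype fun u => by
      rw [Ultrafilter.mapHomeomorph, Homeomorph.homeomorph_mk_coe, Equiv.coe_fn_mk,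
        Ultrafilter.coe_map, map_le_iff_le_comap, π.injective.comap_cofinite_eq]).trans
    homeomorphNonprincipal.symm

theorem ultrafilter_permHomeomorph (π : Equiv.Perm ℕ) (p : OmegaStar) :
    ultrafilter (permHomeomorph π p) = (ultrafilter p).map π := by
  simp [permHomeomorph, ultrafilter, Ultrafilter.mapHomeomorph]

theorem preimage_permHomeomorph_starSet (π : Equiv.Perm ℕ) (A : Set ℕ) :
    permHomeomorph π ⁻¹' starSet A = starSet (π ⁻¹' A) :=
  ext fun p => by simp [starSet, ultrafilter_permHomeomorph]

open Homeomorph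

theorem exists_mul_mem_notMem_stabilizer {ι : Type*} {A : ι → Set ℕ}
    (hA : IsIndependentFamily A) {σ : Set ι} (hσ : σ.Infinite) {h : OmegaStar ≃ₜ OmegaStar}
    {S : Set (OmegaStar ≃ₜ OmegaStar)} (hS : S ∈ 𝓝 h) :
    ∃ i ∈ σ, ∃ g, h * g ∈ S ∧ g ∉ stabilizer (OmegaStar ≃ₜ OmegaStar) (starSet (A i)) := by
  obtain ⟨t, ht, hts⟩ := (hasBasis_iInf_principal_finite _).mem_iff.1
    (tendsto_mul_iInf_stabilizer h hS)
  choose D hD using exists_starSet_eq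
  have := ht.to_subtype
  obtain ⟨i, hi, v, hin, hout⟩ :=
    hA.exists_infinite_fiber_inter_and_diff hσ fun x (C : t) => x ∈ D C
  obtain ⟨τ, hτD, hτA⟩ := Equiv.Perm.exists_comp_eq_and_infinite_preimage_diff hin hout
  refine ⟨i, hi, permHomeomorph τ, hts (mem_iInter₂.2 fun C hC => ?_), ?_⟩
  · rw [SetLike.mem_coe, mem_stabilizer_iff_preimage_eq, ← hD C, preimage_permHomeomorph_starSet]
    exact congrArg starSet (ext fun x => iff_of_eq (congrFun (hτD x) ⟨C, hC⟩))
  · rw [mem_stabilizer_iff_preimage_eq, preimage_permHomeomorph_starSet]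
    exact starSet_ne_of_infinite_diff hτA

instance : PerfectSpace (OmegaStar ≃ₜ OmegaStar) := by
  refine perfectSpace_iff_forall_not_isolated.2 fun h => nhdsWithin_neBot.2 fun S hS => ?_
  obtain ⟨A, hA⟩ := exists_isIndependentFamily_nat
  obtain ⟨i, -, g, hgS, hg⟩ := exists_mul_mem_notMem_stabilizer hA infinite_univ hS
  exact ⟨h * g, hgS, fun hgh => hg (mul_eq_left.1 hgh ▸ one_mem _)⟩

theorem isNowhereDense_biInter_stabilizer {ι : Type*} {A : ι → Set ℕ}
    (hA : IsIndependentFamily A) {σ : Set ι} (hσ : σ.Infinite) :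
    IsNowhereDense (⋂ i ∈ σ,
      (stabilizer (OmegaStar ≃ₜ OmegaStar) (starSet (A i)) : Set (OmegaStar ≃ₜ OmegaStar))) := by
  rw [isNowhereDense_iff_forall_notMem_nhds]
  intro h hh hN
  rw [(isClosed_biInter fun i _ => (isClopen_stabilizer (isClopen_starSet (A i))).isClosed
    ).closure_eq] at hN
  obtain ⟨i, hi, g, hgN, hg⟩ := exists_mul_mem_notMem_stabilizer hA hσ hN
  exact hg ((Subgroup.mul_mem_cancel_left _ (mem_iInter₂.1 hh i hi)).1 (mem_iInter₂.1 hgN i hi))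

end OmegaStar

open OmegaStar Homeomorph

/-- There is a family of `𝔠` many clopen subgroups of `H(ω*)` such that
the corresponding family of pairs (subgroup, complement) is independent, and the
intersection of any infinitely many of the subgroups is nowhere dense in `H(ω*)`. -/
theorem exists_independent_clopen_subgroups :
    ∃ (ι : Type) (_ : Cardinal.mk ι = Cardinal.continuum)
      (G : ι → Subgroup (OmegaStar ≃ₜ OmegaStar)),
      (∀ α : ι, IsClopen (G α : Set (OmegaStar ≃ₜ OmegaStar))) ∧
      (∀ (σ : Finset ι) (ξ : ι → Bool),
        (⋂ α ∈ σ, if ξ α then (G α : Set (OmegaStar ≃ₜ OmegaStar))ᶜ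
          else (G α : Set (OmegaStar ≃ₜ OmegaStar))).Infinite) ∧
      (∀ σ : Set ι, σ.Infinite →
        IsNowhereDense (⋂ α ∈ σ, (G α : Set (OmegaStar ≃ₜ OmegaStar)))) := by
  obtain ⟨A, hA⟩ := exists_isIndependentFamily_nat
  refine ⟨Set ℕ, by rw [Cardinal.mk_set, Cardinal.mk_nat, Cardinal.two_power_aleph0],
    fun S => stabilizer _ (starSet (A S)), fun S => isClopen_stabilizer (isClopen_starSet _),
    fun σ ξ => ?_, fun σ hσ => isNowhereDense_biInter_stabilizer hA hσ⟩
  obtain ⟨π, hπ⟩ := hA.exists_perm_preimage_eq σ ξ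
  have hopen : IsOpen (⋂ S ∈ σ,
      (stabilizer (OmegaStar ≃ₜ OmegaStar) (starSet (A S)) : Set (OmegaStar ≃ₜ OmegaStar))) :=
    isOpen_biInter_finset fun S _ => (isClopen_stabilizer (isClopen_starSet _)).isOpen
  refine Subgroup.infinite_biInter_ite _ σ ξ (g := permHomeomorph π) (fun S hS => ?_)
    (infinite_of_mem_nhds 1 (hopen.mem_nhds (mem_iInter₂.2 fun S _ => one_mem _)))
  rw [mem_stabilizer_iff_preimage_eq, preimage_permHomeomorph_starSet, hπ S hS]
  cases ξ S
  · simp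
  · simpa using (starSet_ne_of_infinite_diff (by simpa using hA.infinite S)).symm
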